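/- A functor F : C → D between convex biproduct categories is a morphism of convex biproduct categories (i.e., it is PCA-enriched and preserves finite coproducts) if and only if F is a strong monoidal functor with respect to the monoidal structures (⊕, 0) and preserves, modulo the structure isomorphisms of the strong monoidal structure, the canonical monoid structure (∇_X = [id_X,id_X], ?_X) and the canonical co-pca structure (◁_p = ⟨id_X,id_X⟩_{p,1-p}, ¡_X) on every object X. -/

import Mathlib

open CategoryTheory

universe v u

/-- A pointed convex algebra (pca): a set with a distinguished point `star` and
binary convex-combination operations `add p` for `p ∈ (0,1)`, extended to `[0,1]`
by `add 1 x y = x` and `add 0 x y = y`. -/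
structure PCAStruct (X : Type u) : Type u where
  star : X
  add : ℝ → X → X → X
  add_one : ∀ x y, add 1 x y = x
  add_zero : ∀ x y, add 0 x y = y
  add_assoc' : ∀ p q : ℝ, 0 < p → p < 1 → 0 < q → q < 1 → ∀ x y z,
    add p (add q x y) z = add (p * q) x (add (p * (1 - q) / (1 - p * q)) y z)
  add_comm' : ∀ p : ℝ, 0 < p → p < 1 → ∀ x y, add p x y = add (1 - p) y x
  add_idem : ∀ p : ℝ, 0 < p → p < 1 → ∀ x, add p x x = x

namespace PCAStruct

variable {X : Type u}

/-- Multiplication by a scalar: `p · x := x +_p ⋆`. -/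
def smul (s : PCAStruct X) (p : ℝ) (x : X) : X := s.add p x s.star

/-- The `n`-ary convex sum `Σᵢ pᵢ · xᵢ` of a pca, defined inductively. -/
noncomputable def csum (s : PCAStruct X) : (n : ℕ) → (Fin n → ℝ) → (Fin n → X) → X
  | 0, _, _ => s.star
  | n + 1, p, x =>
      s.add (p 0) (x 0)
        (s.csum n (fun i => if p 0 = 1 then 0 else p i.succ / (1 - p 0)) (fun i => x i.succ))

end PCAStruct

/-- A PCA-enrichment of a category: every homset carries a pca structure,
compatibly with composition. -/
structure PCAEnrichment (C : Type u) [Category.{v} C] : Type (max u v) where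
  pca : ∀ X Y : C, PCAStruct (X ⟶ Y)
  comp_add : ∀ {X Y Z : C} (e : X ⟶ Y) (p : ℝ), 0 < p → p < 1 → ∀ (f g : Y ⟶ Z),
    e ≫ (pca Y Z).add p f g = (pca X Z).add p (e ≫ f) (e ≫ g)
  add_comp : ∀ {X Y Z : C} (p : ℝ), 0 < p → p < 1 → ∀ (f g : X ⟶ Y) (h : Y ⟶ Z),
    (pca X Y).add p f g ≫ h = (pca X Z).add p (f ≫ h) (g ≫ h)
  comp_star : ∀ {X Y Z : C} (f : X ⟶ Y), f ≫ (pca Y Z).star = (pca X Z).star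
  star_comp : ∀ {X Y Z : C} (f : Y ⟶ Z), (pca X Y).star ≫ f = (pca X Z).star

/-- A convex biproduct category: a PCA-enriched category with a zero object and,
for every pair of objects, an object `X₁ ⊕ X₂` which is simultaneously a coproduct
and a convex product, with `ιᵢ ; πⱼ = δᵢⱼ`. -/
structure ConvexBiproduct (C : Type u) [Category.{v} C] extends PCAEnrichment C where
  zero : C
  fromZero : ∀ X : C, zero ⟶ X
  fromZero_unique : ∀ {X : C} (f : zero ⟶ X), f = fromZero X
  toZero : ∀ X : C, X ⟶ zero
  toZero_unique : ∀ {X : C} (f : X ⟶ zero), f = toZero X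
  sum : C → C → C
  inl : ∀ X Y : C, X ⟶ sum X Y
  inr : ∀ X Y : C, Y ⟶ sum X Y
  fst : ∀ X Y : C, sum X Y ⟶ X
  snd : ∀ X Y : C, sum X Y ⟶ Y
  copair_exists : ∀ {X Y Z : C} (f : X ⟶ Z) (g : Y ⟶ Z),
    ∃! h : sum X Y ⟶ Z, inl X Y ≫ h = f ∧ inr X Y ≫ h = g
  pair_exists : ∀ {A X Y : C} (p q : ℝ), 0 ≤ p → 0 ≤ q → p + q ≤ 1 →
    ∀ (f : A ⟶ X) (g : A ⟶ Y),
      ∃! h : A ⟶ sum X Y,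
        h ≫ fst X Y = (pca A X).smul p f ∧ h ≫ snd X Y = (pca A Y).smul q g
  inl_fst : ∀ X Y : C, inl X Y ≫ fst X Y = 𝟙 X
  inl_snd : ∀ X Y : C, inl X Y ≫ snd X Y = (pca X Y).star
  inr_fst : ∀ X Y : C, inr X Y ≫ fst X Y = (pca Y X).star
  inr_snd : ∀ X Y : C, inr X Y ≫ snd X Y = 𝟙 Y

namespace ConvexBiproduct

variable {C : Type u} [Category.{v} C] (B : ConvexBiproduct C)

/-- The copairing `[f,g]` induced by the coproduct. -/
noncomputable def copair {X Y Z : C} (f : X ⟶ Z) (g : Y ⟶ Z) : B.sum X Y ⟶ Z :=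
  (B.copair_exists f g).choose

/-- The convex pairing `⟨f,g⟩_{p,q}` induced by the convex product. -/
noncomputable def pair {A X Y : C} (p q : ℝ) (f : A ⟶ X) (g : A ⟶ Y) : A ⟶ B.sum X Y :=
  if h : 0 ≤ p ∧ 0 ≤ q ∧ p + q ≤ 1 then
    (B.pair_exists p q h.1 h.2.1 h.2.2 f g).choose
  else f ≫ B.inl X Y

/-- The monoidal product of morphisms, `f ⊕ g`. -/
noncomputable def hsum {X X' Y Y' : C} (f : X ⟶ X') (g : Y ⟶ Y') :
    B.sum X Y ⟶ B.sum X' Y' :=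
  B.copair (f ≫ B.inl X' Y') (g ≫ B.inr X' Y')

/-- The symmetry `σ_{X,Y}`. -/
noncomputable def swap (X Y : C) : B.sum X Y ⟶ B.sum Y X :=
  B.copair (B.inr Y X) (B.inl Y X)

/-- Left unitor `λ_X : 0 ⊕ X ⟶ X`. -/
noncomputable def lunit (X : C) : B.sum B.zero X ⟶ X :=
  B.copair (B.fromZero X) (𝟙 X)

/-- Right unitor `ρ_X : X ⊕ 0 ⟶ X`. -/
noncomputable def runit (X : C) : B.sum X B.zero ⟶ X :=
  B.copair (𝟙 X) (B.fromZero X)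

/-- Associator `(X ⊕ Y) ⊕ Z ⟶ X ⊕ (Y ⊕ Z)`. -/
noncomputable def assocHom (X Y Z : C) : B.sum (B.sum X Y) Z ⟶ B.sum X (B.sum Y Z) :=
  B.copair
    (B.copair (B.inl X (B.sum Y Z)) (B.inl Y Z ≫ B.inr X (B.sum Y Z)))
    (B.inr Y Z ≫ B.inr X (B.sum Y Z))

/-- The codiagonal `∇_X = [id,id] : X ⊕ X ⟶ X`. -/
noncomputable def codiag (X : C) : B.sum X X ⟶ X := B.copair (𝟙 X) (𝟙 X)

/-- The convex diagonal `◁_p = ⟨id,id⟩_{p,1-p} : X ⟶ X ⊕ X`. -/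
noncomputable def diag (p : ℝ) (X : C) : X ⟶ B.sum X X :=
  B.pair p (1 - p) (𝟙 X) (𝟙 X)

/-- Scalar multiplication on homsets. -/
def smul {X Y : C} (p : ℝ) (f : X ⟶ Y) : X ⟶ Y := (B.pca X Y).smul p f

/-- Convex combination on homsets. -/
def add {X Y : C} (p : ℝ) (f g : X ⟶ Y) : X ⟶ Y := (B.pca X Y).add p f g

/-- The zero morphism. -/
def star (X Y : C) : X ⟶ Y := (B.pca X Y).star

end ConvexBiproduct

/-- A functor between PCA-enriched categories is PCA-enriched if it preserves the
pca structure on every homset. -/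
structure IsPCAFunctor {C : Type u} {D : Type v} [Category C] [Category D]
    (EC : PCAEnrichment C) (ED : PCAEnrichment D) (F : C ⥤ D) : Prop where
  map_add : ∀ {X Y : C} (p : ℝ), 0 < p → p < 1 → ∀ (f g : X ⟶ Y),
    F.map ((EC.pca X Y).add p f g) = (ED.pca (F.obj X) (F.obj Y)).add p (F.map f) (F.map g)
  map_star : ∀ {X Y : C},
    F.map ((EC.pca X Y).star) = (ED.pca (F.obj X) (F.obj Y)).star

/-- A functor between convex biproduct categories preserves finite coproducts:
the image of the zero object is initial and the images of the designated
coproduct cocones are coproducts. -/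
structure PreservesCBCoproducts {C : Type u} {D : Type v} [Category C] [Category D]
    (BC : ConvexBiproduct C) (BD : ConvexBiproduct D) (F : C ⥤ D) : Prop where
  zero_initial : ∀ Z : D, ∃! _h : F.obj BC.zero ⟶ Z, True
  sum_coprod : ∀ (X Y : C) {Z : D} (f : F.obj X ⟶ Z) (g : F.obj Y ⟶ Z),
    ∃! h : F.obj (BC.sum X Y) ⟶ Z,
      F.map (BC.inl X Y) ≫ h = f ∧ F.map (BC.inr X Y) ≫ h = g

/-- A morphism of convex biproduct categories: a PCA-enriched functor preserving
finite coproducts. -/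
def IsCBMorphism {C : Type u} {D : Type v} [Category C] [Category D]
    (BC : ConvexBiproduct C) (BD : ConvexBiproduct D) (F : C ⥤ D) : Prop :=
  IsPCAFunctor BC.toPCAEnrichment BD.toPCAEnrichment F ∧ PreservesCBCoproducts BC BD F

/-- The data of a strong monoidal structure on a functor `F` between convex
biproduct categories (with respect to the monoidal structures `(⊕, 0)`), which
moreover preserves, modulo the structure isomorphisms, the canonical monoid
`(∇_X, ?_X)` and the canonical co-pca `(◁_p, ¡_X)` on every object. -/
structure StrongMonoidalPreserving {C : Type u} {D : Type v} [Category C] [Category D]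
    (BC : ConvexBiproduct C) (BD : ConvexBiproduct D) (F : C ⥤ D) where
  /-- the monoidal structure map `μ_{X,Y} : F X ⊕ F Y ⟶ F (X ⊕ Y)` -/
  μ : ∀ X Y : C, BD.sum (F.obj X) (F.obj Y) ⟶ F.obj (BC.sum X Y)
  μIso : ∀ X Y : C, IsIso (μ X Y)
  /-- the monoidal unit map `ε : 0 ⟶ F 0` -/
  ε : BD.zero ⟶ F.obj BC.zero
  εIso : IsIso ε
  μ_natural : ∀ {X X' Y Y' : C} (f : X ⟶ X') (g : Y ⟶ Y'),
    BD.hsum (F.map f) (F.map g) ≫ μ X' Y' = μ X Y ≫ F.map (BC.hsum f g)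
  μ_assoc : ∀ X Y Z : C,
    BD.hsum (μ X Y) (𝟙 (F.obj Z)) ≫ μ (BC.sum X Y) Z ≫ F.map (BC.assocHom X Y Z) =
      BD.assocHom (F.obj X) (F.obj Y) (F.obj Z) ≫
        BD.hsum (𝟙 (F.obj X)) (μ Y Z) ≫ μ X (BC.sum Y Z)
  μ_lunit : ∀ X : C,
    BD.hsum ε (𝟙 (F.obj X)) ≫ μ BC.zero X ≫ F.map (BC.lunit X) = BD.lunit (F.obj X)
  μ_runit : ∀ X : C,
    BD.hsum (𝟙 (F.obj X)) ε ≫ μ X BC.zero ≫ F.map (BC.runit X) = BD.runit (F.obj X)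
  /-- preservation of the monoid multiplication `∇_X = [id,id]` -/
  pres_codiag : ∀ X : C, μ X X ≫ F.map (BC.codiag X) = BD.codiag (F.obj X)
  /-- preservation of the monoid unit `?_X : 0 ⟶ X` -/
  pres_fromZero : ∀ X : C, ε ≫ F.map (BC.fromZero X) = BD.fromZero (F.obj X)
  /-- preservation of the co-pca comultiplication `◁_p = ⟨id,id⟩_{p,1-p}` -/
  pres_diag : ∀ (p : ℝ), 0 < p → p < 1 → ∀ X : C,
    F.map (BC.diag p X) = BD.diag p (F.obj X) ≫ μ X X
  /-- preservation of the co-pca counit `¡_X : X ⟶ 0` -/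
  pres_toZero : ∀ X : C, F.map (BC.toZero X) = BD.toZero (F.obj X) ≫ ε


/-! ### Auxiliary lemmas -/

namespace ConvexBiproduct

universe v₃ u₃

variable {C : Type u₃} [Category.{v₃} C] (B : ConvexBiproduct C)

theorem inl_copair {X Y Z : C} (f : X ⟶ Z) (g : Y ⟶ Z) :
    B.inl X Y ≫ B.copair f g = f :=
  (B.copair_exists f g).choose_spec.1.1

theorem inr_copair {X Y Z : C} (f : X ⟶ Z) (g : Y ⟶ Z) :
    B.inr X Y ≫ B.copair f g = g :=
  (B.copair_exists f g).choose_spec.1.2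

theorem inl_copair_assoc {X Y Z W : C} (f : X ⟶ Z) (g : Y ⟶ Z) (h : Z ⟶ W) :
    B.inl X Y ≫ B.copair f g ≫ h = f ≫ h := by
  rw [← Category.assoc, B.inl_copair]

theorem inr_copair_assoc {X Y Z W : C} (f : X ⟶ Z) (g : Y ⟶ Z) (h : Z ⟶ W) :
    B.inr X Y ≫ B.copair f g ≫ h = g ≫ h := by
  rw [← Category.assoc, B.inr_copair]

theorem copair_unique {X Y Z : C} {f : X ⟶ Z} {g : Y ⟶ Z} {h : B.sum X Y ⟶ Z}
    (h1 : B.inl X Y ≫ h = f) (h2 : B.inr X Y ≫ h = g) : h = B.copair f g :=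
  (B.copair_exists f g).choose_spec.2 h ⟨h1, h2⟩

theorem sum_hom_ext {X Y Z : C} {h h' : B.sum X Y ⟶ Z}
    (h1 : B.inl X Y ≫ h = B.inl X Y ≫ h')
    (h2 : B.inr X Y ≫ h = B.inr X Y ≫ h') : h = h' :=
  (B.copair_unique h1 h2).trans (B.copair_unique rfl rfl).symm

theorem zero_ext {X : C} (f g : B.zero ⟶ X) : f = g :=
  (B.fromZero_unique f).trans (B.fromZero_unique g).symm

theorem star_eq (X Y : C) :
    (B.pca X Y).star = B.toZero X ≫ B.fromZero Y := by
  have h1 : (B.pca X B.zero).star = B.toZero X := B.toZero_unique _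
  rw [← h1, B.star_comp]

theorem diag_eq_add {p : ℝ} (hp : 0 < p) (hp1 : p < 1) (X : C) :
    B.diag p X = (B.pca X (B.sum X X)).add p (B.inl X X) (B.inr X X) := by
  have hc : 0 ≤ p ∧ 0 ≤ 1 - p ∧ p + (1 - p) ≤ 1 := ⟨hp.le, by linarith, by linarith⟩
  have hEU := B.pair_exists p (1 - p) hc.1 hc.2.1 hc.2.2 (𝟙 X) (𝟙 X)
  have hdiag : B.diag p X = hEU.choose := by
    rw [diag, pair, dif_pos hc]
  rw [hdiag]
  refine (hEU.choose_spec.2 _ ⟨?_, ?_⟩).symm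
  · rw [B.add_comp p hp hp1, B.inl_fst, B.inr_fst]
    rfl
  · rw [B.add_comp p hp hp1, B.inl_snd, B.inr_snd,
      (B.pca X X).add_comm' p hp hp1]
    rfl

theorem hsum_codiag {X Y Z : C} (f : X ⟶ Z) (g : Y ⟶ Z) :
    B.hsum f g ≫ B.codiag Z = B.copair f g := by
  refine B.copair_unique ?_ ?_
  · rw [← Category.assoc, hsum, B.inl_copair, Category.assoc, codiag, B.inl_copair,
      Category.comp_id]
  · rw [← Category.assoc, hsum, B.inr_copair, Category.assoc, codiag, B.inr_copair,
      Category.comp_id]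

theorem add_eq_ddc {p : ℝ} (hp : 0 < p) (hp1 : p < 1) {X Y : C} (f g : X ⟶ Y) :
    (B.pca X Y).add p f g = B.diag p X ≫ B.hsum f g ≫ B.codiag Y := by
  rw [B.hsum_codiag, B.diag_eq_add hp hp1, B.add_comp p hp hp1,
    B.inl_copair, B.inr_copair]

end ConvexBiproduct


section MainProof

open ConvexBiproduct

universe v₁ u₁ v₂ u₂

variable {C : Type u₁} {D : Type u₂} [Category.{v₁} C] [Category.{v₂} D]
variable {BC : ConvexBiproduct C} {BD : ConvexBiproduct D} {F : C ⥤ D}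

/-- Forward direction: a morphism of convex biproduct categories carries a
strong monoidal preserving structure. -/
noncomputable def StrongMonoidalPreserving.ofCBMorphism
    (h : IsCBMorphism BC BD F) : StrongMonoidalPreserving BC BD F where
  μ X Y := BD.copair (F.map (BC.inl X Y)) (F.map (BC.inr X Y))
  μIso X Y := by
    obtain ⟨ν, ⟨hν1, hν2⟩, hνu⟩ := h.2.sum_coprod X Y (BD.inl (F.obj X) (F.obj Y))
      (BD.inr (F.obj X) (F.obj Y))
    refine ⟨ν, ?_, ?_⟩
    · refine BD.sum_hom_ext ?_ ?_
      · rw [BD.inl_copair_assoc, hν1, Category.comp_id]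
      · rw [BD.inr_copair_assoc, hν2, Category.comp_id]
    · refine ((h.2.sum_coprod X Y (F.map (BC.inl X Y)) (F.map (BC.inr X Y))).unique
        ⟨?_, ?_⟩ ⟨?_, ?_⟩ :)
      · rw [← Category.assoc, hν1, BD.inl_copair]
      · rw [← Category.assoc, hν2, BD.inr_copair]
      · rw [Category.comp_id]
      · rw [Category.comp_id]
  ε := BD.fromZero (F.obj BC.zero)
  εIso := by
    obtain ⟨e, -, hu⟩ := h.2.zero_initial BD.zero
    refine ⟨e, BD.zero_ext _ _, ?_⟩
    obtain ⟨e', -, hu'⟩ := h.2.zero_initial (F.obj BC.zero)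
    exact ((hu' _ trivial).trans (hu' _ trivial).symm :)
  μ_natural {X X' Y Y'} f g := by
    refine BD.sum_hom_ext ?_ ?_ <;>
      simp only [ConvexBiproduct.hsum, Category.assoc, BD.inl_copair, BD.inr_copair,
        BD.inl_copair_assoc, BD.inr_copair_assoc, ← CategoryTheory.Functor.map_comp,
        BC.inl_copair, BC.inr_copair]
  μ_assoc X Y Z := by
    refine BD.sum_hom_ext (BD.sum_hom_ext ?_ ?_) ?_ <;>
      simp only [ConvexBiproduct.hsum, ConvexBiproduct.assocHom, Category.assoc,
        Category.id_comp, Category.comp_id, BD.inl_copair, BD.inr_copair,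
        BD.inl_copair_assoc, BD.inr_copair_assoc, ← CategoryTheory.Functor.map_comp,
        BC.inl_copair, BC.inr_copair, BC.inl_copair_assoc, BC.inr_copair_assoc]
  μ_lunit X := by
    refine BD.sum_hom_ext ?_ ?_
    · exact BD.zero_ext _ _
    · simp only [ConvexBiproduct.hsum, ConvexBiproduct.lunit, Category.assoc,
        Category.id_comp, Category.comp_id, BD.inl_copair, BD.inr_copair,
        BD.inl_copair_assoc, BD.inr_copair_assoc, ← CategoryTheory.Functor.map_comp,
        BC.inl_copair, BC.inr_copair, CategoryTheory.Functor.map_id]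
  μ_runit X := by
    refine BD.sum_hom_ext ?_ ?_
    · simp only [ConvexBiproduct.hsum, ConvexBiproduct.runit, Category.assoc,
        Category.id_comp, Category.comp_id, BD.inl_copair, BD.inr_copair,
        BD.inl_copair_assoc, BD.inr_copair_assoc, ← CategoryTheory.Functor.map_comp,
        BC.inl_copair, BC.inr_copair, CategoryTheory.Functor.map_id]
    · exact BD.zero_ext _ _
  pres_codiag X := by
    refine BD.sum_hom_ext ?_ ?_ <;>
      simp only [ConvexBiproduct.codiag, Category.assoc, BD.inl_copair, BD.inr_copair,
        BD.inl_copair_assoc, BD.inr_copair_assoc, ← CategoryTheory.Functor.map_comp,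
        BC.inl_copair, BC.inr_copair, CategoryTheory.Functor.map_id]
  pres_fromZero X := BD.zero_ext _ _
  pres_diag p hp hp1 X := by
    have h1 : BC.diag p X = (BC.pca X (BC.sum X X)).add p (BC.inl X X) (BC.inr X X) :=
      BC.diag_eq_add hp hp1 X
    have h2 : BD.diag p (F.obj X)
        = (BD.pca (F.obj X) (BD.sum (F.obj X) (F.obj X))).add p
            (BD.inl (F.obj X) (F.obj X)) (BD.inr (F.obj X) (F.obj X)) :=
      BD.diag_eq_add hp hp1 (F.obj X)
    rw [h1, h.1.map_add p hp hp1, h2, BD.add_comp p hp hp1, BD.inl_copair, BD.inr_copair]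
  pres_toZero X := by
    have h1 : (BC.pca X BC.zero).star = BC.toZero X := BC.toZero_unique _
    rw [← h1, h.1.map_star, BD.star_eq]


/-- Backward direction: a strong monoidal preserving structure yields a morphism
of convex biproduct categories. -/
theorem IsCBMorphism.ofStrongMonoidal (S : StrongMonoidalPreserving BC BD F) :
    IsCBMorphism BC BD F := by
  -- The comparison maps send the designated injections to the injections.
  have F_inl : ∀ X Y : C,
      BD.inl (F.obj X) (F.obj Y) ≫ S.μ X Y = F.map (BC.inl X Y) := by
    intro X Y
    have hru : BC.hsum (𝟙 X) (BC.fromZero Y) = BC.runit X ≫ BC.inl X Y := by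
      refine BC.sum_hom_ext ?_ ?_
      · simp only [ConvexBiproduct.hsum, ConvexBiproduct.runit, Category.assoc,
          BC.inl_copair, BC.inl_copair_assoc, Category.id_comp]
      · exact BC.zero_ext _ _
    have hA : (BD.inl (F.obj X) (F.obj BC.zero) ≫ S.μ X BC.zero) ≫
        F.map (BC.runit X) = 𝟙 (F.obj X) := by
      have h3 := congrArg (fun k => BD.inl (F.obj X) BD.zero ≫ k) (S.μ_runit X)
      simp only [ConvexBiproduct.hsum, ConvexBiproduct.runit, Category.assoc,
        BD.inl_copair, BD.inl_copair_assoc, Category.id_comp] at h3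
      simpa only [← Category.assoc, ConvexBiproduct.runit] using h3
    have h4 := congrArg (fun k => BD.inl (F.obj X) (F.obj BC.zero) ≫ k)
      (S.μ_natural (𝟙 X) (BC.fromZero Y))
    rw [hru] at h4
    simp only [ConvexBiproduct.hsum, Category.assoc, BD.inl_copair_assoc,
      CategoryTheory.Functor.map_id, Category.id_comp,
      CategoryTheory.Functor.map_comp] at h4
    simp only [← Category.assoc] at h4 ⊢
    rw [h4, hA, Category.id_comp]
  have F_inr : ∀ X Y : C,
      BD.inr (F.obj X) (F.obj Y) ≫ S.μ X Y = F.map (BC.inr X Y) := by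
    intro X Y
    have hlu : BC.hsum (BC.fromZero X) (𝟙 Y) = BC.lunit Y ≫ BC.inr X Y := by
      refine BC.sum_hom_ext ?_ ?_
      · exact BC.zero_ext _ _
      · simp only [ConvexBiproduct.hsum, ConvexBiproduct.lunit, Category.assoc,
          BC.inr_copair, BC.inr_copair_assoc, Category.id_comp]
    have hA : (BD.inr (F.obj BC.zero) (F.obj Y) ≫ S.μ BC.zero Y) ≫
        F.map (BC.lunit Y) = 𝟙 (F.obj Y) := by
      have h3 := congrArg (fun k => BD.inr BD.zero (F.obj Y) ≫ k) (S.μ_lunit Y)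
      simp only [ConvexBiproduct.hsum, ConvexBiproduct.lunit, Category.assoc,
        BD.inr_copair, BD.inr_copair_assoc, Category.id_comp] at h3
      simpa only [← Category.assoc, ConvexBiproduct.lunit] using h3
    have h4 := congrArg (fun k => BD.inr (F.obj BC.zero) (F.obj Y) ≫ k)
      (S.μ_natural (BC.fromZero X) (𝟙 Y))
    rw [hlu] at h4
    simp only [ConvexBiproduct.hsum, Category.assoc, BD.inr_copair_assoc,
      CategoryTheory.Functor.map_id, Category.id_comp,
      CategoryTheory.Functor.map_comp] at h4
    simp only [← Category.assoc] at h4 ⊢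
    rw [h4, hA, Category.id_comp]
  constructor
  · constructor
    · -- map_add
      intro X Y p hp hp1 f g
      rw [BC.add_eq_ddc hp hp1, BD.add_eq_ddc hp hp1 (F.map f) (F.map g),
        CategoryTheory.Functor.map_comp, CategoryTheory.Functor.map_comp,
        S.pres_diag p hp hp1, Category.assoc, ← Category.assoc (S.μ X X),
        ← S.μ_natural f g, Category.assoc, S.pres_codiag]
    · -- map_star
      intro X Y
      rw [BC.star_eq, CategoryTheory.Functor.map_comp, S.pres_toZero,
        Category.assoc, S.pres_fromZero, ← BD.star_eq]
  · constructor
    · -- zero_initial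
      intro Z
      haveI := S.εIso
      refine ⟨inv S.ε ≫ BD.fromZero Z, trivial, fun h' _ => ?_⟩
      have hz : S.ε ≫ h' = BD.fromZero Z := BD.fromZero_unique _
      rw [← hz, IsIso.inv_hom_id_assoc]
    · -- sum_coprod
      intro X Y Z f g
      haveI := S.μIso X Y
      refine ⟨inv (S.μ X Y) ≫ BD.copair f g, ⟨?_, ?_⟩, ?_⟩
      · rw [← F_inl, Category.assoc, IsIso.hom_inv_id_assoc, BD.inl_copair]
      · rw [← F_inr, Category.assoc, IsIso.hom_inv_id_assoc, BD.inr_copair]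
      · rintro h' ⟨hh1, hh2⟩
        have hcp : S.μ X Y ≫ h' = BD.copair f g :=
          BD.copair_unique (by rw [← Category.assoc, F_inl, hh1])
            (by rw [← Category.assoc, F_inr, hh2])
        rw [← hcp, IsIso.inv_hom_id_assoc]

/-- **Statement 4.** A functor `F : C ⥤ D` between convex biproduct categories is
a morphism of convex biproduct categories (PCA-enriched and preserving finite
coproducts) if and only if it carries a strong monoidal structure with respect
to `(⊕, 0)` preserving, modulo the structure isomorphisms, the canonical monoid
`(∇_X, ?_X)` and the canonical co-pca `(◁_p, ¡_X)` on every object. -/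
theorem cbMorphism_iff_strongMonoidal {C : Type u} {D : Type v}
    [Category C] [Category D]
    (BC : ConvexBiproduct C) (BD : ConvexBiproduct D) (F : C ⥤ D) :
    IsCBMorphism BC BD F ↔ Nonempty (StrongMonoidalPreserving BC BD F) :=
  ⟨fun h => ⟨StrongMonoidalPreserving.ofCBMorphism h⟩,
   fun ⟨S⟩ => IsCBMorphism.ofStrongMonoidal S⟩

end MainProof
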